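/- (Laplace transform of the renewal equation; the core computation in the proof of Corollary 3.3 for Lévy processes.) Let b > 0 and c ≥ 0 be real numbers and let β be a finite Borel measure on [0,∞) with c + β([0,∞)) ≤ b. Let H : [0,∞) → [0,1] be Borel measurable and suppose that for every K ≥ 0, H(K) = (c/b)(1 − e^{−bK}) + ∫_0^K e^{−b y} ( ∫_{[0, K−y)} H(K − y − z) β(dz) ) dy. Then for every δ > 0, δ + b − ∫_{[0,∞)} e^{−δ z} β(dz) > 0 and ∫_0^∞ δ e^{−δ K} H(K) dK = c / ( δ + b − ∫_{[0,∞)} e^{−δ z} β(dz) ). -/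

import Mathlib

open MeasureTheory Set intervalIntegral


lemma renewalAux_exp_int {a : ℝ} (ha : 0 < a) :
    ∫ x in Set.Ioi (0:ℝ), Real.exp (-a * x) = 1 / a := by
  have h := integral_comp_mul_left_Ioi (fun x => Real.exp (-x)) 0 ha
  simp only [mul_zero, integral_exp_neg_Ioi, neg_zero, Real.exp_zero, smul_eq_mul, mul_one] at h
  simpa [neg_mul] using h

lemma renewalAux_shift (f : ℝ → ℝ) (c : ℝ) :
    ∫ x in Set.Ioi c, f x = ∫ u in Set.Ioi (0:ℝ), f (u + c) := by
  rw [← MeasureTheory.integral_indicator measurableSet_Ioi,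
    ← MeasureTheory.integral_indicator measurableSet_Ioi,
    ← integral_add_right_eq_self (fun x => (Set.Ioi c).indicator f x) c]
  congr 1
  funext u
  by_cases h : 0 < u
  · have : c < u + c := by linarith
    simp [Set.indicator_apply, h, this]
  · have : ¬ c < u + c := by intro hh; exact h (by linarith)
    simp [Set.indicator_apply, h, this]

set_option maxHeartbeats 1600000 in
/-- **Laplace transform of the renewal equation** (core computation in the proof of
Corollary 3.3 for Lévy processes).  Let `b > 0`, `c ≥ 0`, and let `β` be a finite Borel
measure on `[0,∞)` with `c + β([0,∞)) ≤ b`.  If `H : [0,∞) → [0,1]` is Borel measurable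
and satisfies, for every `K ≥ 0`,
`H(K) = (c/b)(1 − e^{−bK}) + ∫_0^K e^{−by} (∫_{[0,K−y)} H(K−y−z) β(dz)) dy`,
then for every `δ > 0` we have `δ + b − ∫ e^{−δz} β(dz) > 0` and
`∫_0^∞ δ e^{−δK} H(K) dK = c / (δ + b − ∫_{[0,∞)} e^{−δz} β(dz))`. -/
theorem renewal_equation_laplace_transform
    (b c : ℝ) (hb : 0 < b) (hc : 0 ≤ c)
    (β : Measure ℝ) [IsFiniteMeasure β] (hβsupp : β (Set.Iio 0) = 0)
    (hdom : c + (β (Set.Ici 0)).toReal ≤ b)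
    (H : ℝ → ℝ) (hHmeas : Measurable H)
    (hH0 : ∀ K, 0 ≤ K → 0 ≤ H K) (hH1 : ∀ K, 0 ≤ K → H K ≤ 1)
    (heq : ∀ K, 0 ≤ K →
      H K = (c / b) * (1 - Real.exp (-b * K)) +
        ∫ y in (0 : ℝ)..K, Real.exp (-b * y) *
          ∫ z in Set.Ico 0 (K - y), H (K - y - z) ∂β) :
    ∀ δ : ℝ, 0 < δ →
      (0 < δ + b - ∫ z in Set.Ici 0, Real.exp (-δ * z) ∂β) ∧
      (∫ K in Set.Ioi (0 : ℝ), δ * Real.exp (-δ * K) * H K) =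
        c / (δ + b - ∫ z in Set.Ici 0, Real.exp (-δ * z) ∂β) := by
  intro δ hδ
  have hβfin : β (Set.Ici 0) ≠ ⊤ := measure_ne_top β _
  set M : ℝ := (β (Set.Ici 0)).toReal with hMdef
  have hM0 : 0 ≤ M := ENNReal.toReal_nonneg
  have hMcb : M ≤ b - c := by linarith
  have hβae : ∀ᵐ z ∂β, 0 ≤ z := by
    rw [ae_iff]
    convert hβsupp using 2
    ext z; simp [not_le]
  set B : ℝ := ∫ z in Set.Ici (0:ℝ), Real.exp (-δ * z) ∂β with hBdef
  -- basic facts about g u := ∫ z in Ico 0 u, H (u - z) ∂β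
  set g : ℝ → ℝ := fun u => ∫ z in Set.Ico 0 u, H (u - z) ∂β with hgdef
  have hgint : ∀ u : ℝ, IntegrableOn (fun z => H (u - z)) (Set.Ico 0 u) β := by
    intro u
    refine Integrable.mono' (integrable_const 1)
      ((hHmeas.comp (measurable_const.sub measurable_id)).aestronglyMeasurable) ?_
    refine (ae_restrict_iff' measurableSet_Ico).2 (ae_of_all _ fun z hz => ?_)
    have h1 : 0 ≤ u - z := by
      have := hz.1; have := hz.2; linarith
    rw [Real.norm_eq_abs, abs_le]
    exact ⟨by linarith [hH0 _ h1], hH1 _ h1⟩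
  have hg0 : ∀ u, 0 ≤ g u := fun u =>
    setIntegral_nonneg measurableSet_Ico fun z hz => hH0 _ (by linarith [hz.1, hz.2])
  have hgM : ∀ u, g u ≤ M := by
    intro u
    have h1 : g u ≤ ∫ z in Set.Ico 0 u, (1:ℝ) ∂β := by
      refine setIntegral_mono_on (hgint u) (integrableOn_const (measure_ne_top β _))
        measurableSet_Ico (fun z hz => hH1 _ (by linarith [hz.1, hz.2]))
    have h2 : ∫ z in Set.Ico 0 u, (1:ℝ) ∂β = (β (Set.Ico 0 u)).toReal := by simp; rfl
    have h3 : (β (Set.Ico 0 u)).toReal ≤ M := by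
      rw [hMdef]
      exact (ENNReal.toReal_le_toReal (measure_ne_top β _) hβfin).2
        (measure_mono fun z hz => hz.1)
    linarith
  have hgm : Measurable g := by
    have hfm : Measurable (fun p : ℝ × ℝ => if p.2 ∈ Set.Ico 0 p.1 then H (p.1 - p.2) else 0) := by
      refine Measurable.ite ?_ (hHmeas.comp (measurable_fst.sub measurable_snd)) measurable_const
      exact (measurableSet_le measurable_const measurable_snd).inter
        (measurableSet_lt measurable_snd measurable_fst)
    have h := hfm.stronglyMeasurable.integral_prod_right' (ν := β)
    have h2 : g = fun u => ∫ z, (if z ∈ Set.Ico 0 u then H (u - z) else 0) ∂β := by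
      funext u
      have h3 : ∫ z, (if z ∈ Set.Ico 0 u then H (u - z) else 0) ∂β
          = ∫ z in Set.Ico 0 u, H (u - z) ∂β := by
        rw [← MeasureTheory.integral_indicator measurableSet_Ico]
        congr 1
        funext z
        simp [Set.indicator_apply]
      exact h3.symm
    rw [h2]
    exact h.measurable
  -- first Laplace-type quantities
  set L0 : ℝ := ∫ K in Set.Ioi (0:ℝ), Real.exp (-δ * K) * H K with hL0def
  have hint_expH : IntegrableOn (fun K => Real.exp (-δ * K) * H K) (Set.Ioi 0) := by
    refine Integrable.mono' (exp_neg_integrableOn_Ioi 0 hδ)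
      (((measurable_id.const_mul (-δ)).exp.mul hHmeas).aestronglyMeasurable) ?_
    refine (ae_restrict_iff' measurableSet_Ioi).2 (ae_of_all _ fun K hK => ?_)
    have hK' : (0:ℝ) ≤ K := le_of_lt hK
    have h1 : |H K| ≤ 1 := abs_le.2 ⟨by linarith [hH0 K hK'], hH1 K hK'⟩
    rw [Real.norm_eq_abs, abs_mul, abs_of_pos (Real.exp_pos _)]
    calc Real.exp (-δ * K) * |H K| ≤ Real.exp (-δ * K) * 1 := by
          gcongr
      _ = Real.exp (-δ * K) := mul_one _
  have hL : (∫ K in Set.Ioi (0 : ℝ), δ * Real.exp (-δ * K) * H K) = δ * L0 := by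
    rw [hL0def, ← MeasureTheory.integral_const_mul]
    congr 1
    funext K
    ring
  -- facts about B
  have hβint_exp : IntegrableOn (fun z => Real.exp (-δ * z)) (Set.Ici 0) β := by
    refine Integrable.mono' (integrable_const 1)
      ((measurable_id.const_mul (-δ)).exp.aestronglyMeasurable) ?_
    refine (ae_restrict_iff' measurableSet_Ici).2 (ae_of_all _ fun z hz => ?_)
    rw [Real.norm_eq_abs, abs_of_pos (Real.exp_pos _)]
    apply Real.exp_le_one_iff.2
    simp only [Set.mem_Ici] at hz
    nlinarith
  have hB0 : 0 ≤ B :=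
    setIntegral_nonneg measurableSet_Ici fun z _ => (Real.exp_pos _).le
  have hBM : B ≤ M := by
    have h1 : B ≤ ∫ z in Set.Ici (0:ℝ), (1:ℝ) ∂β := by
      refine setIntegral_mono_on hβint_exp (integrableOn_const (measure_ne_top β _))
        measurableSet_Ici (fun z hz => ?_)
      apply Real.exp_le_one_iff.2
      simp only [Set.mem_Ici] at hz
      nlinarith
    have h2 : ∫ z in Set.Ici (0:ℝ), (1:ℝ) ∂β = M := by simp [hMdef]; rfl
    linarith
  have hD : 0 < δ + b - B := by linarith
  refine ⟨hD, ?_⟩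
  -- Fubini step 1 : the convolution with exp(-b y)
  set f1 : ℝ × ℝ → ℝ := fun p =>
    if p.2 ≤ p.1 then Real.exp (-δ * p.1) * Real.exp (-b * p.2) * g (p.1 - p.2) else 0
    with hf1def
  have hf1m : Measurable f1 := by
    refine Measurable.ite (measurableSet_le measurable_snd measurable_fst) ?_ measurable_const
    exact ((measurable_fst.const_mul (-δ)).exp.mul
      ((measurable_snd.const_mul (-b)).exp)).mul (hgm.comp (measurable_fst.sub measurable_snd))
  have hf1int : Integrable f1
      ((volume.restrict (Set.Ioi 0)).prod (volume.restrict (Set.Ioi 0))) := by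
    have hbound : Integrable
        (fun p : ℝ × ℝ => (M * Real.exp (-δ * p.1)) * Real.exp (-b * p.2))
        ((volume.restrict (Set.Ioi 0)).prod (volume.restrict (Set.Ioi 0))) :=
      ((exp_neg_integrableOn_Ioi 0 hδ).const_mul M).mul_prod (exp_neg_integrableOn_Ioi 0 hb)
    refine Integrable.mono' hbound hf1m.aestronglyMeasurable (ae_of_all _ fun p => ?_)
    by_cases h : p.2 ≤ p.1
    · simp only [hf1def, if_pos h]
      rw [Real.norm_eq_abs, abs_mul, abs_mul, abs_of_pos (Real.exp_pos _),
        abs_of_pos (Real.exp_pos _)]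
      have h1 : |g (p.1 - p.2)| ≤ M := abs_le.2 ⟨by linarith [hg0 (p.1 - p.2)], hgM _⟩
      calc Real.exp (-δ * p.1) * Real.exp (-b * p.2) * |g (p.1 - p.2)|
          ≤ Real.exp (-δ * p.1) * Real.exp (-b * p.2) * M := by
            gcongr
        _ = M * Real.exp (-δ * p.1) * Real.exp (-b * p.2) := by ring
    · simp only [hf1def, if_neg h, norm_zero]
      positivity
  have hswap1 : (∫ K in Set.Ioi (0:ℝ), ∫ y in Set.Ioi (0:ℝ), f1 (K, y))
      = ∫ y in Set.Ioi (0:ℝ), ∫ K in Set.Ioi (0:ℝ), f1 (K, y) :=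
    integral_integral_swap hf1int
  have hinner1 : ∀ K : ℝ, 0 < K → (∫ y in Set.Ioi (0:ℝ), f1 (K, y))
      = Real.exp (-δ * K) * ∫ y in (0:ℝ)..K, Real.exp (-b * y) * g (K - y) := by
    intro K hK
    rw [intervalIntegral.integral_of_le hK.le]
    have h1 : ∀ y, f1 (K, y)
        = (Set.Iic K).indicator (fun y => Real.exp (-δ * K) * Real.exp (-b * y) * g (K - y)) y := by
      intro y
      simp only [hf1def, Set.indicator_apply, Set.mem_Iic]
    simp_rw [h1]
    rw [MeasureTheory.setIntegral_indicator measurableSet_Iic, Set.Ioi_inter_Iic,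
      ← MeasureTheory.integral_const_mul]
    exact setIntegral_congr_fun measurableSet_Ioc fun y _ => by ring
  set G : ℝ := ∫ u in Set.Ioi (0:ℝ), Real.exp (-δ * u) * g u with hGdef
  have hinner2 : ∀ y : ℝ, 0 < y →
      (∫ K in Set.Ioi (0:ℝ), f1 (K, y)) = Real.exp (-(δ + b) * y) * G := by
    intro y hy
    have h1 : ∀ K, f1 (K, y)
        = (Set.Ici y).indicator (fun K => Real.exp (-δ * K) * Real.exp (-b * y) * g (K - y)) K := by
      intro K
      simp only [hf1def, Set.indicator_apply, Set.mem_Ici]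
    simp_rw [h1]
    have hsub : Set.Ici y ⊆ Set.Ioi (0:ℝ) := fun K hK => lt_of_lt_of_le hy hK
    rw [MeasureTheory.setIntegral_indicator measurableSet_Ici,
      Set.inter_eq_self_of_subset_right hsub,
      MeasureTheory.integral_Ici_eq_integral_Ioi,
      renewalAux_shift (fun K => Real.exp (-δ * K) * Real.exp (-b * y) * g (K - y)) y]
    have h2 : ∀ u : ℝ, Real.exp (-δ * (u + y)) * Real.exp (-b * y) * g (u + y - y)
        = Real.exp (-(δ + b) * y) * (Real.exp (-δ * u) * g u) := by
      intro u
      rw [show u + y - y = u by ring, show -δ * (u + y) = -δ * u + -δ * y by ring,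
        Real.exp_add, show -(δ + b) * y = -δ * y + -b * y by ring, Real.exp_add]
      ring
    simp_rw [h2]
    rw [MeasureTheory.integral_const_mul]
  have hT : (∫ K in Set.Ioi (0:ℝ),
        Real.exp (-δ * K) * ∫ y in (0:ℝ)..K, Real.exp (-b * y) * g (K - y)) = G / (δ + b) := by
    have lhs_eq : (∫ K in Set.Ioi (0:ℝ),
          Real.exp (-δ * K) * ∫ y in (0:ℝ)..K, Real.exp (-b * y) * g (K - y))
        = ∫ K in Set.Ioi (0:ℝ), ∫ y in Set.Ioi (0:ℝ), f1 (K, y) :=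
      setIntegral_congr_fun measurableSet_Ioi fun K hK => (hinner1 K hK).symm
    rw [lhs_eq, hswap1,
      setIntegral_congr_fun measurableSet_Ioi (fun y (hy : y ∈ Set.Ioi (0:ℝ)) => hinner2 y hy),
      MeasureTheory.integral_mul_const, renewalAux_exp_int (by linarith : (0:ℝ) < δ + b)]
    ring
  -- Fubini step 2 : G = L0 * B
  set f2 : ℝ × ℝ → ℝ := fun p =>
    if 0 ≤ p.2 ∧ p.2 < p.1 then Real.exp (-δ * p.1) * H (p.1 - p.2) else 0 with hf2def
  have hf2m : Measurable f2 := by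
    refine Measurable.ite ?_
      ((measurable_fst.const_mul (-δ)).exp.mul (hHmeas.comp (measurable_fst.sub measurable_snd)))
      measurable_const
    exact (measurableSet_le measurable_const measurable_snd).inter
      (measurableSet_lt measurable_snd measurable_fst)
  have hf2int : Integrable f2 ((volume.restrict (Set.Ioi 0)).prod β) := by
    have hbound : Integrable (fun p : ℝ × ℝ => Real.exp (-δ * p.1) * (1:ℝ))
        ((volume.restrict (Set.Ioi 0)).prod β) :=
      (exp_neg_integrableOn_Ioi 0 hδ).mul_prod (integrable_const 1)
    refine Integrable.mono' hbound hf2m.aestronglyMeasurable (ae_of_all _ fun p => ?_)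
    by_cases h : 0 ≤ p.2 ∧ p.2 < p.1
    · simp only [hf2def, if_pos h]
      have h1 : (0:ℝ) ≤ p.1 - p.2 := by linarith [h.2]
      have h2 : |H (p.1 - p.2)| ≤ 1 := abs_le.2 ⟨by linarith [hH0 _ h1], hH1 _ h1⟩
      rw [Real.norm_eq_abs, abs_mul, abs_of_pos (Real.exp_pos _)]
      exact mul_le_mul_of_nonneg_left h2 (Real.exp_pos _).le
    · simp only [hf2def, if_neg h, norm_zero]
      positivity
  have hswap2 : (∫ u in Set.Ioi (0:ℝ), ∫ z, f2 (u, z) ∂β)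
      = ∫ z, (∫ u in Set.Ioi (0:ℝ), f2 (u, z)) ∂β :=
    integral_integral_swap hf2int
  have hinner2a : ∀ u : ℝ, (∫ z, f2 (u, z) ∂β) = Real.exp (-δ * u) * g u := by
    intro u
    have h1 : ∀ z, f2 (u, z)
        = (Set.Ico 0 u).indicator (fun z => Real.exp (-δ * u) * H (u - z)) z := by
      intro z
      simp only [hf2def, Set.indicator_apply, Set.mem_Ico]
    simp_rw [h1]
    rw [MeasureTheory.integral_indicator measurableSet_Ico, MeasureTheory.integral_const_mul]
  have hinner2b : ∀ᵐ z ∂β, (∫ u in Set.Ioi (0:ℝ), f2 (u, z)) = Real.exp (-δ * z) * L0 := by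
    refine hβae.mono fun z hz => ?_
    have h1 : ∀ u, f2 (u, z)
        = (Set.Ioi z).indicator (fun u => Real.exp (-δ * u) * H (u - z)) u := by
      intro u
      simp only [hf2def, Set.indicator_apply, Set.mem_Ioi, hz, true_and]
    simp_rw [h1]
    have hsub : Set.Ioi z ⊆ Set.Ioi (0:ℝ) := fun u hu => lt_of_le_of_lt hz hu
    rw [MeasureTheory.setIntegral_indicator measurableSet_Ioi,
      Set.inter_eq_self_of_subset_right hsub,
      renewalAux_shift (fun u => Real.exp (-δ * u) * H (u - z)) z]
    have h2 : ∀ u : ℝ, Real.exp (-δ * (u + z)) * H (u + z - z)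
        = Real.exp (-δ * z) * (Real.exp (-δ * u) * H u) := by
      intro u
      rw [show u + z - z = u by ring, show -δ * (u + z) = -δ * u + -δ * z by ring, Real.exp_add]
      ring
    simp_rw [h2]
    rw [MeasureTheory.integral_const_mul]
  have hG : G = L0 * B := by
    have e1 : G = ∫ u in Set.Ioi (0:ℝ), ∫ z, f2 (u, z) ∂β := by
      rw [hGdef]
      exact (setIntegral_congr_fun measurableSet_Ioi fun u _ => hinner2a u).symm
    rw [e1, hswap2, integral_congr_ae hinner2b, MeasureTheory.integral_mul_const]
    have e2 : ∫ z, Real.exp (-δ * z) ∂β = B := by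
      rw [hBdef, ← MeasureTheory.integral_indicator measurableSet_Ici]
      refine integral_congr_ae (hβae.mono fun z hz => ?_)
      exact (Set.indicator_of_mem hz fun z => Real.exp (-δ * z)).symm
    rw [e2]
    ring
  -- splitting the renewal equation under the Laplace integral
  have hint1 : IntegrableOn
      (fun K => Real.exp (-δ * K) * ((c / b) * (1 - Real.exp (-b * K)))) (Set.Ioi 0) := by
    refine Integrable.mono' ((exp_neg_integrableOn_Ioi 0 hδ).const_mul (c / b))
      (((measurable_id.const_mul (-δ)).exp.mul
        ((measurable_const.sub (measurable_id.const_mul (-b)).exp).const_mul (c / b))).aestronglyMeasurable)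
      ?_
    refine (ae_restrict_iff' measurableSet_Ioi).2 (ae_of_all _ fun K hK => ?_)
    have h1 : Real.exp (-b * K) ≤ 1 := Real.exp_le_one_iff.2 (by nlinarith [Set.mem_Ioi.1 hK])
    have h2 : 0 < Real.exp (-b * K) := Real.exp_pos _
    have h3 : 0 ≤ c / b := div_nonneg hc hb.le
    rw [Real.norm_eq_abs, abs_mul, abs_of_pos (Real.exp_pos _),
      abs_of_nonneg (by nlinarith : (0:ℝ) ≤ (c / b) * (1 - Real.exp (-b * K)))]
    have h4 : (c / b) * (1 - Real.exp (-b * K)) ≤ c / b := by nlinarith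
    calc Real.exp (-δ * K) * ((c / b) * (1 - Real.exp (-b * K)))
        ≤ Real.exp (-δ * K) * (c / b) := by gcongr
      _ = c / b * Real.exp (-δ * K) := by ring
  have hint2 : IntegrableOn
      (fun K => Real.exp (-δ * K) * ∫ y in (0:ℝ)..K, Real.exp (-b * y) * g (K - y))
      (Set.Ioi 0) := by
    have h0 : Integrable (fun K => ∫ y in Set.Ioi (0:ℝ), f1 (K, y))
        (volume.restrict (Set.Ioi 0)) := hf1int.integral_prod_left
    refine h0.congr ?_
    exact (ae_restrict_iff' measurableSet_Ioi).2 (ae_of_all _ fun K hK => hinner1 K hK)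
  have hsplit : L0 = (∫ K in Set.Ioi (0:ℝ),
        Real.exp (-δ * K) * ((c / b) * (1 - Real.exp (-b * K))))
      + ∫ K in Set.Ioi (0:ℝ),
        Real.exp (-δ * K) * ∫ y in (0:ℝ)..K, Real.exp (-b * y) * g (K - y) := by
    rw [hL0def, ← integral_add hint1 hint2]
    refine setIntegral_congr_fun measurableSet_Ioi fun K hK => ?_
    rw [heq K (le_of_lt hK)]
    ring
  have hfirst : (∫ K in Set.Ioi (0:ℝ),
        Real.exp (-δ * K) * ((c / b) * (1 - Real.exp (-b * K)))) = (c / b) * (1 / δ - 1 / (δ + b)) := by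
    have h1 : Set.EqOn (fun K => Real.exp (-δ * K) * ((c / b) * (1 - Real.exp (-b * K))))
        (fun K => (c / b) * Real.exp (-δ * K) - (c / b) * Real.exp (-(δ + b) * K)) (Set.Ioi 0) := by
      intro K _
      simp only
      rw [show -(δ + b) * K = -δ * K + -b * K by ring, Real.exp_add]
      ring
    rw [setIntegral_congr_fun measurableSet_Ioi h1,
      integral_sub ((exp_neg_integrableOn_Ioi 0 hδ).const_mul _)
        ((exp_neg_integrableOn_Ioi 0 (by linarith : (0:ℝ) < δ + b)).const_mul _),
      MeasureTheory.integral_const_mul, MeasureTheory.integral_const_mul,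
      renewalAux_exp_int hδ, renewalAux_exp_int (by linarith : (0:ℝ) < δ + b)]
    ring
  -- final algebra
  have hδb : (0:ℝ) < δ + b := by linarith
  have hmain : L0 = (c / b) * (1 / δ - 1 / (δ + b)) + (L0 * B) / (δ + b) := by
    conv_lhs => rw [hsplit]
    rw [hfirst, hT, hG]
  clear_value L0 B G M
  have hkey : δ * L0 * (δ + b - B) = c := by
    field_simp at hmain
    have h2 : L0 * (δ * (δ + b)) = c + L0 * B * δ := by
      apply mul_right_cancel₀ hb.ne'
      linear_combination hmain
    linear_combination h2
  rw [hL, eq_div_iff (ne_of_gt hD)]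
  linarith [hkey]
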